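/- Let A ∈ ℝ^{m×n} have unit ℓ²-norm columns a₁,…,aₙ and suppose μ > 0 satisfies |⟨a_j, a_k⟩| ≤ μ for all j ≠ k. If x ∈ ℝⁿ satisfies Ax = b and ‖x‖₀ < (1 + μ)/(2μ), then x is the unique sparsest solution: every y with Ay = b and ‖y‖₀ ≤ ‖x‖₀ satisfies y = x. -/

import Mathlib

/-- The number of nonzero entries of a vector (`‖x‖₀`). -/
noncomputable def l0 {n : ℕ} (x : Fin n → ℝ) : ℕ :=
  (Finset.univ.filter fun j => x j ≠ 0).card

/-!
If `x` and `y` both solve `A y = b`, then `z = y - x` lies in the kernel of `A` and has at most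
`2 ‖x‖₀ < 1 + 1/μ` nonzero entries. But a nonzero kernel vector has at least `1 + 1/μ` of them:
pairing `A z = 0` with the column `a_j` at which `|z j|` is largest gives
`|z j| ≤ ∑_{k ≠ j} |⟨a_j, a_k⟩| |z k| ≤ μ (‖z‖₀ - 1) |z j|`.
-/

open Matrix Finset

theorem l0_sub_le {n : ℕ} (y x : Fin n → ℝ) : l0 (y - x) ≤ l0 y + l0 x := by
  unfold l0
  refine (card_le_card fun k hk => ?_).trans (card_union_le _ _)
  simp only [mem_filter, mem_univ, true_and, mem_union, Pi.sub_apply] at hk ⊢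
  by_contra! h
  exact hk (by rw [h.1, h.2, sub_zero])

theorem one_le_mul_l0_sub_one_of_mulVec_eq_zero {n : ℕ} (G : Matrix (Fin n) (Fin n) ℝ)
    (μ : ℝ) (hdiag : ∀ j, G j j = 1) (hoff : ∀ j k, j ≠ k → |G j k| ≤ μ)
    {z : Fin n → ℝ} (hz : G *ᵥ z = 0) (hz0 : z ≠ 0) : 1 ≤ μ * ((l0 z : ℝ) - 1) := by
  set S := univ.filter fun k => z k ≠ 0
  obtain ⟨j₀, hj₀⟩ := Function.ne_iff.mp hz0
  obtain ⟨j, -, hjmax⟩ := univ.exists_max_image (fun k => |z k|) ⟨j₀, mem_univ _⟩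
  have hzj : 0 < |z j| := (abs_pos.mpr hj₀).trans_le (hjmax j₀ (mem_univ _))
  have hjS : j ∈ S := by simpa [S] using abs_pos.mp hzj
  have hrow : z j + ∑ k ∈ S.erase j, G j k * z k = 0 := by
    have h : ∑ k ∈ S, G j k * z k = 0 := by
      rw [sum_filter_of_ne fun k _ h => right_ne_zero_of_mul h]
      exact congrFun hz j
    rwa [← add_sum_erase S _ hjS, hdiag, one_mul] at h
  have hbound : |z j| ≤ (S.card - 1) * (μ * |z j|) :=
    calc |z j| = |∑ k ∈ S.erase j, G j k * z k| := by rw [eq_neg_of_add_eq_zero_left hrow, abs_neg]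
      _ ≤ ∑ k ∈ S.erase j, |G j k| * |z k| := by
          simpa only [abs_mul] using abs_sum_le_sum_abs (fun k => G j k * z k) (S.erase j)
      _ ≤ ∑ k ∈ S.erase j, μ * |z j| := sum_le_sum fun k hk =>
          mul_le_mul (hoff j k (ne_of_mem_erase hk).symm) (hjmax k (mem_univ _))
            (abs_nonneg _) ((abs_nonneg _).trans (hoff j k (ne_of_mem_erase hk).symm))
      _ = (S.card - 1) * (μ * |z j|) := by
          rw [sum_const, nsmul_eq_mul, cast_card_erase_of_mem hjS]
  refine le_of_mul_le_mul_right (?_ : 1 * |z j| ≤ μ * ((l0 z : ℝ) - 1) * |z j|) hzj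
  unfold l0
  linarith

theorem one_le_coherence_mul_l0_sub_one {m n : ℕ} (A : Matrix (Fin m) (Fin n) ℝ)
    (hunit : ∀ j, ∑ i, A i j * A i j = 1) (μ : ℝ)
    (hcoh : ∀ j k, j ≠ k → |∑ i, A i j * A i k| ≤ μ)
    {z : Fin n → ℝ} (hz : A *ᵥ z = 0) (hz0 : z ≠ 0) : 1 ≤ μ * ((l0 z : ℝ) - 1) := by
  have hgram : ∀ j k, (Aᵀ * A) j k = ∑ i, A i j * A i k := fun j k => by
    simp only [mul_apply, transpose_apply]
  refine one_le_mul_l0_sub_one_of_mulVec_eq_zero (Aᵀ * A) μ (fun j => by rw [hgram, hunit])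
    (fun j k hjk => by rw [hgram]; exact hcoh j k hjk) ?_ hz0
  rw [← mulVec_mulVec, hz, mulVec_zero]

/-- **Classical coherence-based uniqueness of sparse recovery.**
If `A` has unit-norm columns with mutual coherence bounded by `μ > 0`, and `x` solves
`A x = b` with `‖x‖₀ < (1 + μ) / (2μ)`, then `x` is the unique sparsest solution. -/
theorem coherence_uniqueness {m n : ℕ}
    (A : Matrix (Fin m) (Fin n) ℝ)
    (hunit : ∀ j, ∑ i, A i j * A i j = 1)
    (μ : ℝ) (hμ : 0 < μ)
    (hcoh : ∀ j k, j ≠ k → |∑ i, A i j * A i k| ≤ μ)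
    (x : Fin n → ℝ) (b : Fin m → ℝ) (hx : A.mulVec x = b)
    (hsparse : (l0 x : ℝ) < (1 + μ) / (2 * μ)) :
    ∀ y : Fin n → ℝ, A.mulVec y = b → l0 y ≤ l0 x → y = x := by
  intro y hy hyx
  by_contra hne
  have hker : A *ᵥ (y - x) = 0 := by rw [mulVec_sub, hy, hx, sub_self]
  have hspark := one_le_coherence_mul_l0_sub_one A hunit μ hcoh hker (sub_ne_zero.mpr hne)
  have hsupp : (l0 (y - x) : ℝ) ≤ 2 * l0 x := by
    have := l0_sub_le y x
    exact_mod_cast (by omega : l0 (y - x) ≤ 2 * l0 x)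
  rw [lt_div_iff₀ (by positivity)] at hsparse
  nlinarith
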